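/- Let n ≥ 2, let g₂, …, g_n be real numbers, set M = 1 + Σ_{i=2}^{n} g_i², and let g₁ be a real number with g₁² ≥ M. Then for every unit vector ξ = (ξ₁, …, ξ_n) ∈ ℝⁿ one has M ξ₁² − 2 g₁ Σ_{i=2}^{n} g_i ξ₁ ξ_i + g₁² Σ_{i=2}^{n} ξ_i² ≥ 1/(2n). -/
import Mathlib


open Finset

private lemma amgm_aux {u v w : ℝ} (hu : 0 ≤ u) (hv : 0 ≤ v) (h : w ^ 2 ≤ u * v) :
    2 * w ≤ u + v := by
  nlinarith [sq_nonneg (u - v), sq_nonneg (u + v - 2 * w), sq_nonneg w]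

/-- Lower ellipticity bound for the hodograph-transformed equation: if `g₁² ≥ M` with
`M = 1 + Σ_{i=2}^n g_i²`, then for every unit vector `ξ`,
`M ξ₁² − 2 g₁ Σ g_i ξ₁ ξ_i + g₁² Σ ξ_i² ≥ 1/(2n)`. -/
theorem hodograph_lower_ellipticity
    (n : ℕ) (hn : 2 ≤ n) (g : ℕ → ℝ)
    (hg : g 1 ^ 2 ≥ 1 + ∑ i ∈ Finset.Icc 2 n, g i ^ 2)
    (ξ : ℕ → ℝ) (hξ : ∑ i ∈ Finset.Icc 1 n, ξ i ^ 2 = 1) :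
    (1 + ∑ i ∈ Finset.Icc 2 n, g i ^ 2) * ξ 1 ^ 2
      - 2 * g 1 * ∑ i ∈ Finset.Icc 2 n, g i * ξ 1 * ξ i
      + g 1 ^ 2 * ∑ i ∈ Finset.Icc 2 n, ξ i ^ 2 ≥ 1 / (2 * (n : ℝ)) := by
  set S := ∑ i ∈ Finset.Icc 2 n, g i ^ 2 with hS
  set T := ∑ i ∈ Finset.Icc 2 n, ξ i ^ 2 with hT
  set B := ∑ i ∈ Finset.Icc 2 n, g i * ξ i with hB
  set a := ξ 1 with ha
  -- the cross sum factors
  have hcross : ∑ i ∈ Finset.Icc 2 n, g i * a * ξ i = a * B := by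
    rw [hB, Finset.mul_sum]
    exact Finset.sum_congr rfl (fun i _ => by ring)
  -- split off the i = 1 term
  have hsplit : Finset.Icc 1 n = insert 1 (Finset.Icc 2 n) := by
    ext i
    simp only [Finset.mem_Icc, Finset.mem_insert]
    omega
  have hsum : a ^ 2 + T = 1 := by
    rw [← hξ, hsplit, Finset.sum_insert (by simp)]
  have hS0 : 0 ≤ S := Finset.sum_nonneg fun i _ => sq_nonneg _
  have hT0 : 0 ≤ T := Finset.sum_nonneg fun i _ => sq_nonneg _
  -- Cauchy–Schwarz
  have hCS : B ^ 2 ≤ S * T := by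
    rw [hB, hS, hT]
    exact Finset.sum_mul_sq_le_sq_mul_sq _ _ _
  have hq : (1 + S) * a ^ 2 - 2 * g 1 * (a * B) + g 1 ^ 2 * T ≥ 1 / 4 := by
    rcases le_or_gt (1/4 : ℝ) (a ^ 2) with h | h
    · have hw2 : (g 1 * a * B) ^ 2 ≤ S * a ^ 2 * (g 1 ^ 2 * T) := by
        have := mul_le_mul_of_nonneg_left hCS (mul_nonneg (sq_nonneg (g 1)) (sq_nonneg a))
        nlinarith [this]
      have hAM : 2 * (g 1 * a * B) ≤ S * a ^ 2 + g 1 ^ 2 * T :=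
        amgm_aux (mul_nonneg hS0 (sq_nonneg a)) (mul_nonneg (sq_nonneg (g 1)) hT0) hw2
      nlinarith [hAM]
    · -- a² < 1/4, so T > 3/4
      have hT34 : T ≥ 3/4 := by linarith
      nlinarith [sq_nonneg (g 1 * T - 2 * a * B), mul_le_mul_of_nonneg_left hCS (sq_nonneg a), mul_le_mul_of_nonneg_right hg hT0, mul_nonneg hS0 (sq_nonneg a), mul_nonneg hS0 hT0]
  have hfrac : (1 : ℝ) / (2 * n) ≤ 1 / 4 := by
    apply div_le_div_of_nonneg_left (by norm_num) (by norm_num)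
    have : (2 : ℝ) ≤ (n : ℝ) := by exact_mod_cast hn
    linarith
  rw [hcross]
  linarith
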